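/- arXiv:1604.08929 — 7 statements merged into one kernel-verified Lean document; each statement's English description precedes it below -/
import Mathlib

section
/- Let S be a nonempty proper subset of ℕ. Then S is a numerical semigroup with the Arf property if and only if there exists an Arf sequence (x_1, …, x_n) such that S = S(x_1, …, x_n). -/
/-- A numerical semigroup: a subset of ℕ containing 0, closed under addition,
with finite complement. -/
def IsNumericalSemigroup (S : Set ℕ) : Prop :=
  0 ∈ S ∧ (∀ a ∈ S, ∀ b ∈ S, a + b ∈ S) ∧ Sᶜ.Finite

/-- The Arf property: for all x ≥ y ≥ z in S, x + y - z ∈ S. -/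
def HasArfProperty (S : Set ℕ) : Prop :=
  ∀ x ∈ S, ∀ y ∈ S, ∀ z ∈ S, z ≤ y → y ≤ x → x + y - z ∈ S

/-- The conductor: the least c such that every n ≥ c lies in S. -/
noncomputable def conductorOf (S : Set ℕ) : ℕ := sInf {c | ∀ n, c ≤ n → n ∈ S}

/-- The Frobenius number: the largest natural number not in S. -/
noncomputable def frobeniusOf (S : Set ℕ) : ℕ := sSup {n | n ∉ S}

/-- The genus: the number of gaps of S. -/
noncomputable def genusOf (S : Set ℕ) : ℕ := Sᶜ.ncard

/-- The multiplicity: the least positive element of S. -/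
noncomputable def multiplicityOf (S : Set ℕ) : ℕ := sInf {n | n ∈ S ∧ 0 < n}

/-- w(i) = min { s ∈ S : s ≡ i (mod m) }. -/
noncomputable def aperyW (S : Set ℕ) (m i : ℕ) : ℕ := sInf {s | s ∈ S ∧ s % m = i}

/-- The cocycle h(i,j) = (w(i) + w(j) - w((i+j) mod m)) / m, as a rational number. -/
noncomputable def cocycle (S : Set ℕ) (m i j : ℕ) : ℚ :=
  ((aperyW S m i : ℚ) + (aperyW S m j : ℚ) - (aperyW S m ((i + j) % m) : ℚ)) / (m : ℚ)

/-- An Arf sequence (x₁, …, xₙ), 0-indexed: xₙ ≥ ⋯ ≥ x₁ ≥ 2, and each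
x_{i+1} is either a sum x_i + ⋯ + x_j for some j ≤ i, or at least x_i + ⋯ + x₁. -/
def ArfSeq (n : ℕ) (x : Fin n → ℕ) : Prop :=
  1 ≤ n ∧ Monotone x ∧ (∀ i, 2 ≤ x i) ∧
  ∀ i : Fin n, ∀ h : i.1 + 1 < n,
    (∃ j : Fin n, j ≤ i ∧ x ⟨i.1 + 1, h⟩ = ∑ k ∈ Finset.Icc j i, x k) ∨
    (∑ k ∈ Finset.Iic i, x k) ≤ x ⟨i.1 + 1, h⟩

/-- The set S(x₁,…,xₙ) = {0} ∪ {xₙ + ⋯ + x_k : 1 ≤ k ≤ n} ∪ {z : z ≥ x₁ + ⋯ + xₙ}. -/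
def arfSet (n : ℕ) (x : Fin n → ℕ) : Set ℕ :=
  {z | z = 0 ∨ (∃ k : Fin n, z = ∑ i ∈ Finset.Ici k, x i) ∨ (∑ i, x i) ≤ z}

/-- The numerical-semigroup-like set generated by A ⊆ ℕ. -/
def genNS (A : Set ℕ) : Set ℕ := (AddSubmonoid.closure A : Set ℕ)


/-!
If `S` is an Arf numerical semigroup of multiplicity `m`, its blowup `{t | t + m ∈ S}` is again an
Arf numerical semigroup, of smaller genus, containing `m` (as `2m ∈ S`), and
`S = {0} ∪ (m + blowup)`. Conversely `{0} ∪ (m + T)` is an Arf numerical semigroup whenever `T` is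
one and `m ∈ T`. Since `S(x₁, …, xₙ₊₁) = {0} ∪ (xₙ₊₁ + S(x₁, …, xₙ))`, and the condition an Arf
sequence imposes on `xₙ₊₁` says exactly that `xₙ₊₁ ∈ S(x₁, …, xₙ)`, both directions follow by
induction.
-/

open Finset

def shiftInsertZero (m : ℕ) (S : Set ℕ) : Set ℕ := insert 0 ((m + ·) '' S)

def blowup (S : Set ℕ) (m : ℕ) : Set ℕ := {t | t + m ∈ S}

section Semigroup

variable {S : Set ℕ} {m : ℕ}

theorem HasArfProperty.add_mem (hS : HasArfProperty S) (h0 : 0 ∈ S) {a b : ℕ} (ha : a ∈ S)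
    (hb : b ∈ S) : a + b ∈ S := by
  rcases le_total a b with hab | hba
  · simpa [add_comm] using hS b hb a ha 0 h0 (Nat.zero_le a) hab
  · simpa using hS a ha b hb 0 h0 (Nat.zero_le b) hba

theorem eq_univ_of_one_mem (h0 : 0 ∈ S) (hadd : ∀ a ∈ S, ∀ b ∈ S, a + b ∈ S) (h1 : 1 ∈ S) :
    S = Set.univ := by
  refine Set.eq_univ_of_forall fun z => ?_
  induction z with
  | zero => exact h0
  | succ k ih => exact hadd k ih 1 h1

theorem exists_pos_mem (hfin : Sᶜ.Finite) : ∃ s ∈ S, 0 < s := by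
  obtain ⟨N, hN⟩ := hfin.bddAbove
  exact ⟨N + 1, by_contra fun h => by simpa using hN h, N.succ_pos⟩

theorem multiplicityOf_mem (hfin : Sᶜ.Finite) : multiplicityOf S ∈ S ∧ 0 < multiplicityOf S :=
  Nat.sInf_mem (exists_pos_mem hfin)

theorem multiplicityOf_le {s : ℕ} (hs : s ∈ S) (hpos : 0 < s) : multiplicityOf S ≤ s :=
  Nat.sInf_le ⟨hs, hpos⟩

theorem mem_shiftInsertZero {z : ℕ} : z ∈ shiftInsertZero m S ↔ z = 0 ∨ ∃ t ∈ S, m + t = z :=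
  Iff.rfl

theorem exists_eq_add_of_mem_shiftInsertZero {z : ℕ} (hz : z ∈ shiftInsertZero m S)
    (hz0 : z ≠ 0) : ∃ t ∈ S, m + t = z :=
  (mem_shiftInsertZero.1 hz).resolve_left hz0

theorem shiftInsertZero_add_mem (hadd : ∀ a ∈ S, ∀ b ∈ S, a + b ∈ S) (hm : m ∈ S) :
    ∀ a ∈ shiftInsertZero m S, ∀ b ∈ shiftInsertZero m S, a + b ∈ shiftInsertZero m S := by
  simp only [mem_shiftInsertZero]
  rintro a (rfl | ⟨s, hs, rfl⟩) b (rfl | ⟨t, ht, rfl⟩)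
  · exact Or.inl rfl
  · exact Or.inr ⟨t, ht, (zero_add _).symm⟩
  · exact Or.inr ⟨s, hs, rfl⟩
  · exact Or.inr ⟨s + (m + t), hadd s hs _ (hadd m hm t ht), by ring⟩

theorem isNumericalSemigroup_shiftInsertZero (hS : IsNumericalSemigroup S) (hm : m ∈ S) :
    IsNumericalSemigroup (shiftInsertZero m S) := by
  obtain ⟨-, hadd, hfin⟩ := hS
  refine ⟨Or.inl rfl, shiftInsertZero_add_mem hadd hm, ?_⟩
  refine ((Set.finite_Iio m).union (hfin.image (m + ·))).subset fun z hz => ?_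
  by_cases hzm : z < m
  · exact Or.inl hzm
  · exact Or.inr ⟨z - m, fun h => hz (mem_shiftInsertZero.2 (Or.inr ⟨z - m, h, by omega⟩)),
      show m + (z - m) = z by omega⟩

theorem hasArfProperty_shiftInsertZero (hS : HasArfProperty S) (h0 : 0 ∈ S) (hm : m ∈ S) :
    HasArfProperty (shiftInsertZero m S) := by
  intro a ha b hb c hc hcb hba
  by_cases hc0 : c = 0
  · subst hc0
    exact shiftInsertZero_add_mem (fun _ hx _ hy => hS.add_mem h0 hx hy) hm a ha b hb
  obtain ⟨s, hs, rfl⟩ := exists_eq_add_of_mem_shiftInsertZero ha (by omega)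
  obtain ⟨t, ht, rfl⟩ := exists_eq_add_of_mem_shiftInsertZero hb (by omega)
  obtain ⟨u, hu, rfl⟩ := exists_eq_add_of_mem_shiftInsertZero hc hc0
  exact mem_shiftInsertZero.2
    (Or.inr ⟨s + t - u, hS s hs t ht u hu (by omega) (by omega), by omega⟩)

theorem hasArfProperty_blowup (hS : HasArfProperty S) : HasArfProperty (blowup S m) := by
  intro a ha b hb c hc hcb hba
  have h := hS (a + m) ha (b + m) hb (c + m) hc (by omega) (by omega)
  rwa [show a + m + (b + m) - (c + m) = a + b - c + m by omega] at h

theorem isNumericalSemigroup_blowup (hfin : Sᶜ.Finite) (hS : HasArfProperty S) (hm : m ∈ S) :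
    IsNumericalSemigroup (blowup S m) := by
  have h0 : 0 ∈ blowup S m := by simpa [blowup] using hm
  exact ⟨h0, fun a ha b hb => (hasArfProperty_blowup hS).add_mem h0 ha hb,
    hfin.preimage (add_left_injective m).injOn⟩

theorem shiftInsertZero_blowup_multiplicityOf (h0 : 0 ∈ S) :
    shiftInsertZero (multiplicityOf S) (blowup S (multiplicityOf S)) = S := by
  ext z
  simp only [mem_shiftInsertZero, blowup, Set.mem_ofPred_eq]
  constructor
  · rintro (rfl | ⟨t, ht, rfl⟩)
    · exact h0
    · rwa [add_comm]
  · intro hz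
    rcases Nat.eq_zero_or_pos z with rfl | hpos
    · exact Or.inl rfl
    · have := multiplicityOf_le hz hpos
      exact Or.inr ⟨z - multiplicityOf S, by rwa [Nat.sub_add_cancel this], by omega⟩

theorem ncard_compl_blowup_lt (hfin : Sᶜ.Finite) {k : ℕ} (hk : k ∉ S) (hkm : k < m) :
    (blowup S m)ᶜ.ncard < Sᶜ.ncard := by
  have hsub : (· + m) '' (blowup S m)ᶜ ⊂ Sᶜ := by
    refine ⟨fun _ ⟨t, ht, hz⟩ => hz ▸ ht, fun h => ?_⟩
    obtain ⟨t, -, ht⟩ := h hk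
    have : t + m = k := ht
    omega
  simpa [Set.ncard_image_of_injective _ (add_left_injective m)] using Set.ncard_lt_ncard hsub hfin

end Semigroup

/-- `arfSet` for the first `n` terms of a sequence indexed by `ℕ`. -/
def arfSetN (n : ℕ) (y : ℕ → ℕ) : Set ℕ :=
  {z | z = 0 ∨ (∃ k < n, z = ∑ i ∈ Ico k n, y i) ∨ ∑ i ∈ range n, y i ≤ z}

/-- `ArfSeq` for the first `n` terms of a sequence indexed by `ℕ`, with the alternative imposed on
each term phrased as membership in the Arf set of the preceding terms. -/
def IsArfSeqN (n : ℕ) (y : ℕ → ℕ) : Prop :=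
  (∀ i < n, 2 ≤ y i) ∧ (∀ i < n, ∀ j < i, y j ≤ y i) ∧ ∀ i < n, 0 < i → y i ∈ arfSetN i y

section ArfSeqN

variable {n : ℕ} {y : ℕ → ℕ}

@[simp]
theorem arfSetN_zero : arfSetN 0 y = Set.univ := by
  ext z
  simp [arfSetN]

theorem arfSetN_succ : arfSetN (n + 1) y = shiftInsertZero (y n) (arfSetN n y) := by
  ext z
  simp only [arfSetN, mem_shiftInsertZero, Set.mem_ofPred_eq]
  constructor
  · rintro (rfl | ⟨k, hk, rfl⟩ | hge)
    · exact Or.inl rfl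
    · refine Or.inr ?_
      rcases Nat.lt_succ_iff_lt_or_eq.1 hk with hk | rfl
      · exact ⟨_, Or.inr (Or.inl ⟨k, hk, rfl⟩), by rw [sum_Ico_succ_top hk.le, add_comm]⟩
      · exact ⟨0, Or.inl rfl, by simp⟩
    · rw [sum_range_succ] at hge
      exact Or.inr ⟨z - y n, Or.inr (Or.inr (by omega)), by omega⟩
  · rintro (rfl | ⟨t, (rfl | ⟨k, hk, rfl⟩ | hge), rfl⟩)
    · exact Or.inl rfl
    · exact Or.inr (Or.inl ⟨n, n.lt_succ_self, by simp⟩)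
    · exact Or.inr (Or.inl ⟨k, by omega, by rw [sum_Ico_succ_top hk.le, add_comm]⟩)
    · exact Or.inr (Or.inr (by rw [sum_range_succ]; omega))

theorem arfSetN_congr {y' : ℕ → ℕ} (h : ∀ i < n, y i = y' i) : arfSetN n y = arfSetN n y' := by
  have hIco (k : ℕ) : ∑ i ∈ Ico k n, y i = ∑ i ∈ Ico k n, y' i :=
    sum_congr rfl fun i hi => h i (mem_Ico.1 hi).2
  have hrange : ∑ i ∈ range n, y i = ∑ i ∈ range n, y' i :=
    sum_congr rfl fun i hi => h i (mem_range.1 hi)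
  simp only [arfSetN, hIco, hrange]

theorem isArfSeqN_zero : IsArfSeqN 0 y := by
  simp [IsArfSeqN]

theorem isArfSeqN_succ : IsArfSeqN (n + 1) y ↔ IsArfSeqN n y ∧
    2 ≤ y n ∧ (∀ j < n, y j ≤ y n) ∧ (0 < n → y n ∈ arfSetN n y) := by
  simp only [IsArfSeqN, Nat.forall_lt_succ_right]
  tauto

theorem isArfSeqN_congr {y' : ℕ → ℕ} (h : ∀ i < n, y i = y' i) :
    IsArfSeqN n y ↔ IsArfSeqN n y' := by
  have hset : ∀ i < n, arfSetN i y = arfSetN i y' := fun i hi =>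
    arfSetN_congr fun j hj => h j (hj.trans hi)
  unfold IsArfSeqN
  constructor
  · rintro ⟨h2, hmono, hmem⟩
    refine ⟨fun i hi => h i hi ▸ h2 i hi, fun i hi j hj => ?_, fun i hi hi0 => ?_⟩
    · rw [← h i hi, ← h j (hj.trans hi)]; exact hmono i hi j hj
    · rw [← h i hi, ← hset i hi]; exact hmem i hi hi0
  · rintro ⟨h2, hmono, hmem⟩
    refine ⟨fun i hi => (h i hi).symm ▸ h2 i hi, fun i hi j hj => ?_, fun i hi hi0 => ?_⟩
    · rw [h i hi, h j (hj.trans hi)]; exact hmono i hi j hj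
    · rw [h i hi, hset i hi]; exact hmem i hi hi0

theorem IsArfSeqN.le_of_mem_arfSetN (hy : IsArfSeqN n y) {z : ℕ} (hz : z ∈ arfSetN n y)
    (hz0 : z ≠ 0) {j : ℕ} (hj : j < n) : y j ≤ z := by
  have hlast : y j ≤ y (n - 1) := by
    rcases (Nat.le_sub_one_of_lt hj).lt_or_eq with hlt | heq
    · exact hy.2.1 (n - 1) (by omega) j hlt
    · rw [heq]
  refine hlast.trans ?_
  rcases hz with rfl | ⟨k, hk, rfl⟩ | hge
  · exact absurd rfl hz0
  · exact single_le_sum (fun _ _ => Nat.zero_le _) (mem_Ico.2 ⟨by omega, by omega⟩)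
  · exact (single_le_sum (fun _ _ => Nat.zero_le _) (mem_range.2 (by omega))).trans hge

theorem IsArfSeqN.isNumericalSemigroup_and_hasArfProperty (hy : IsArfSeqN n y) :
    IsNumericalSemigroup (arfSetN n y) ∧ HasArfProperty (arfSetN n y) := by
  induction n with
  | zero =>
    rw [arfSetN_zero]
    exact ⟨⟨trivial, fun _ _ _ _ => trivial, by simp⟩, fun _ _ _ _ _ _ _ _ => trivial⟩
  | succ n ih =>
    obtain ⟨hy, -, -, hmem⟩ := isArfSeqN_succ.1 hy
    obtain ⟨hNS, hArf⟩ := ih hy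
    have hyn : y n ∈ arfSetN n y := by
      rcases n.eq_zero_or_pos with rfl | hn
      · simp
      · exact hmem hn
    rw [arfSetN_succ]
    exact ⟨isNumericalSemigroup_shiftInsertZero hNS hyn,
      hasArfProperty_shiftInsertZero hArf hNS.1 hyn⟩

theorem exists_isArfSeqN_of_hasArfProperty {S : Set ℕ} (hS : IsNumericalSemigroup S)
    (hArf : HasArfProperty S) : ∃ n y, IsArfSeqN n y ∧ S = arfSetN n y := by
  induction h : Sᶜ.ncard using Nat.strong_induction_on generalizing S with
  | _ g ih =>
  obtain ⟨h0, hadd, hfin⟩ := hS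
  by_cases h1 : 1 ∈ S
  · exact ⟨0, id, isArfSeqN_zero, by rw [arfSetN_zero]; exact eq_univ_of_one_mem h0 hadd h1⟩
  set m := multiplicityOf S
  obtain ⟨hm, hm0⟩ := multiplicityOf_mem hfin
  have hm1 : 1 < m := by
    by_contra hle
    exact h1 (show m = 1 by omega ▸ hm)
  have hmm : m ∈ blowup S m := hadd m hm m hm
  obtain ⟨n, y, hy, hSy⟩ := ih _ (h ▸ ncard_compl_blowup_lt hfin h1 hm1)
    (isNumericalSemigroup_blowup hfin hArf hm) (hasArfProperty_blowup hArf) rfl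
  have hagree : ∀ i < n, y i = Function.update y n m i := fun i hi =>
    (Function.update_of_ne hi.ne _ _).symm
  have hset : arfSetN n (Function.update y n m) = blowup S m := by
    rw [← arfSetN_congr hagree, hSy]
  refine ⟨n + 1, Function.update y n m,
    isArfSeqN_succ.2 ⟨(isArfSeqN_congr hagree).1 hy, ?_, fun j hj => ?_, fun _ => ?_⟩, ?_⟩
  · rw [Function.update_self]; exact hm1
  · rw [Function.update_self, Function.update_of_ne hj.ne]
    exact hy.le_of_mem_arfSetN (hSy ▸ hmm) hm0.ne' hj
  · rwa [Function.update_self, hset]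
  · rw [arfSetN_succ, Function.update_self, hset, shiftInsertZero_blowup_multiplicityOf h0]

end ArfSeqN

section Transfer

variable {n : ℕ} {x : Fin n → ℕ} {y : ℕ → ℕ}

theorem sum_fin_eq_sum_map_val (hxy : ∀ i, x i = y i) (s : Finset (Fin n)) :
    ∑ i ∈ s, x i = ∑ i ∈ s.map Fin.valEmbedding, y i := by
  rw [sum_map]
  exact sum_congr rfl fun i _ => hxy i

theorem arfSet_eq_arfSetN (hxy : ∀ i, x i = y i) : arfSet n x = arfSetN n y := by
  have hIci (k : Fin n) : ∑ i ∈ Ici k, x i = ∑ i ∈ Ico (k : ℕ) n, y i := by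
    rw [sum_fin_eq_sum_map_val hxy, Fin.map_valEmbedding_Ici]
  have huniv : ∑ i, x i = ∑ i ∈ range n, y i := by
    rw [sum_fin_eq_sum_map_val hxy, Fin.map_valEmbedding_univ, Nat.Iio_eq_range]
  ext z
  simp only [arfSet, arfSetN, Set.mem_ofPred_eq, hIci, huniv, Fin.exists_iff, exists_prop]

theorem mem_arfSetN_succ_iff {i z : ℕ} (hz : z ≠ 0) :
    z ∈ arfSetN (i + 1) y ↔ (∃ j ≤ i, z = ∑ k ∈ Icc j i, y k) ∨ ∑ k ∈ Iic i, y k ≤ z := by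
  simp only [arfSetN, Set.mem_ofPred_eq, hz, false_or, Ico_add_one_right_eq_Icc,
    ← Nat.Iio_eq_range, Iio_add_one_eq_Iic, Nat.lt_succ_iff]

theorem arfSeq_step_iff_mem_arfSetN (hxy : ∀ i, x i = y i) (i : Fin n) (h : i.1 + 1 < n)
    (hpos : y (i + 1) ≠ 0) :
    ((∃ j : Fin n, j ≤ i ∧ x ⟨i + 1, h⟩ = ∑ k ∈ Icc j i, x k) ∨
      ∑ k ∈ Iic i, x k ≤ x ⟨i + 1, h⟩) ↔ y (i + 1) ∈ arfSetN (i + 1) y := by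
  have hIcc (j : Fin n) : ∑ k ∈ Icc j i, x k = ∑ k ∈ Icc (j : ℕ) i, y k := by
    rw [sum_fin_eq_sum_map_val hxy, Fin.map_valEmbedding_Icc]
  rw [mem_arfSetN_succ_iff hpos, hxy, sum_fin_eq_sum_map_val hxy, Fin.map_valEmbedding_Iic]
  refine or_congr_left ⟨fun ⟨j, hj, e⟩ => ⟨j, hj, e.trans (hIcc j)⟩, fun ⟨j, hj, e⟩ => ?_⟩
  exact ⟨⟨j, by omega⟩, hj, e.trans (hIcc ⟨j, by omega⟩).symm⟩

theorem arfSeq_iff_isArfSeqN (hxy : ∀ i, x i = y i) : ArfSeq n x ↔ 1 ≤ n ∧ IsArfSeqN n y := by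
  have htwo : (∀ i, 2 ≤ x i) ↔ ∀ i < n, 2 ≤ y i := by
    simp only [hxy, Fin.forall_iff]
  have hmono : Monotone x ↔ ∀ i < n, ∀ j < i, y j ≤ y i := by
    refine ⟨fun hx i hi j hj => ?_, fun hy a b hab => ?_⟩
    · simpa only [hxy] using hx (show (⟨j, hj.trans hi⟩ : Fin n) ≤ ⟨i, hi⟩ from hj.le)
    · rcases hab.lt_or_eq with hlt | rfl
      · rw [hxy, hxy]; exact hy b b.2 a hlt
      · exact le_rfl
  unfold ArfSeq IsArfSeqN
  rw [htwo, hmono]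
  refine and_congr_right fun _ => ⟨fun ⟨hm, h2, hc⟩ => ⟨h2, hm, fun i hi hi0 => ?_⟩,
    fun ⟨h2, hm, hc⟩ => ⟨hm, h2, fun i h => ?_⟩⟩
  · obtain ⟨i, rfl⟩ : ∃ i', i = i' + 1 := ⟨i - 1, by omega⟩
    exact (arfSeq_step_iff_mem_arfSetN hxy ⟨i, by omega⟩ hi
      (Nat.zero_lt_of_lt (h2 _ hi)).ne').1 (hc _ hi)
  · exact (arfSeq_step_iff_mem_arfSetN hxy i h (Nat.zero_lt_of_lt (h2 _ h)).ne').2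
      (hc _ h (Nat.succ_pos _))

end Transfer

theorem arf_iff_arfSeq_general (S : Set ℕ) (hproper : S ≠ Set.univ) :
    (IsNumericalSemigroup S ∧ HasArfProperty S) ↔
      ∃ (n : ℕ) (x : Fin n → ℕ), ArfSeq n x ∧ S = arfSet n x := by
  constructor
  · rintro ⟨hNS, hArf⟩
    obtain ⟨n, y, hy, rfl⟩ := exists_isArfSeqN_of_hasArfProperty hNS hArf
    have hn : 1 ≤ n := Nat.one_le_iff_ne_zero.2 fun h => hproper (h ▸ arfSetN_zero)
    exact ⟨n, fun i => y i, (arfSeq_iff_isArfSeqN fun _ => rfl).2 ⟨hn, hy⟩,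
      (arfSet_eq_arfSetN fun _ => rfl).symm⟩
  · rintro ⟨n, x, hx, rfl⟩
    let y (i : ℕ) : ℕ := if h : i < n then x ⟨i, h⟩ else 0
    have hxy (i : Fin n) : x i = y i := by simp [y]
    rw [arfSet_eq_arfSetN hxy]
    exact ((arfSeq_iff_isArfSeqN hxy).1 hx).2.isNumericalSemigroup_and_hasArfProperty

theorem arf_iff_arfSeq (S : Set ℕ) (hne : S.Nonempty) (hproper : S ≠ Set.univ) :
    (IsNumericalSemigroup S ∧ HasArfProperty S) ↔
      ∃ (n : ℕ) (x : Fin n → ℕ), ArfSeq n x ∧ S = arfSet n x :=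
  arf_iff_arfSeq_general S hproper
end

section
/- Let (x_1, …, x_n) be an Arf sequence. Then the set S(x_1, …, x_n) is a numerical semigroup whose Frobenius number equals x_1 + ⋯ + x_n − 1 (equivalently, whose conductor equals x_1 + ⋯ + x_n), and whose genus equals x_1 + ⋯ + x_n − n. -/
/-!
Let `S_j` be the set attached to the first `j` terms. Then `S_0 = ℕ` and
`S_{j+1} = {0} ∪ (x_{j+1} + S_j)`, and the Arf condition says precisely that `x_{j+1} ∈ S_j`.
Closure under addition follows by induction on `j`: for nonzero `a = x_{j+1} + a'` and
`b = x_{j+1} + b'` we have `a + b = x_{j+1} + (a' + (x_{j+1} + b'))`, and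
`a' + (x_{j+1} + b') ∈ S_j`.
With `T = x_1 + ⋯ + x_n`, the elements below `T` are `0` and the `n - 1` distinct tail sums
`x_k + ⋯ + x_n` with `k ≥ 2`, all at most `T - x_1 ≤ T - 2`; so `T - 1` is the largest gap and
there are `T - n` gaps.
-/

open Finset

theorem frobeniusOf_eq_of_Ici_subset {S : Set ℕ} {c : ℕ} (hS : Set.Ici c ⊆ S)
    (hc : c - 1 ∉ S) : frobeniusOf S = c - 1 := by
  have hbdd : ∀ z ∉ S, z ≤ c - 1 := fun z hz => by
    by_contra h
    exact hz (hS (by simp only [Set.mem_Ici]; omega))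
  exact le_antisymm (csSup_le ⟨_, hc⟩ hbdd) (le_csSup ⟨_, hbdd⟩ hc)

theorem conductorOf_eq_of_Ici_subset {S : Set ℕ} {c : ℕ} (hS : Set.Ici c ⊆ S)
    (hc : c - 1 ∉ S) : conductorOf S = c :=
  le_antisymm (Nat.sInf_le fun _ => @hS _) <| le_csInf ⟨c, fun _ => @hS _⟩ fun d hd => by
    by_contra h
    exact hc (hd _ (by omega))

/-- `S(f 0, …, f (j - 1))`; the empty tail `k = j` accounts for `0`. -/
def truncArfSet (f : ℕ → ℕ) (j : ℕ) : Set ℕ :=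
  {z | (∃ k ≤ j, z = ∑ i ∈ Ico k j, f i) ∨ ∑ i ∈ range j, f i ≤ z}

section truncArfSet

variable {f : ℕ → ℕ} {j : ℕ}

theorem mem_truncArfSet_succ {z : ℕ} :
    z ∈ truncArfSet f (j + 1) ↔ z = 0 ∨ ∃ w ∈ truncArfSet f j, z = f j + w := by
  simp only [truncArfSet, Set.mem_ofPred_eq, sum_range_succ]
  constructor
  · rintro (⟨k, hk, rfl⟩ | hz)
    · rcases hk.lt_or_eq with hk | rfl
      · have hk : k ≤ j := Nat.le_of_lt_succ hk
        exact Or.inr ⟨_, Or.inl ⟨k, hk, rfl⟩, by rw [sum_Ico_succ_top hk, add_comm]⟩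
      · simp
    · exact Or.inr ⟨z - f j, Or.inr (by omega), by omega⟩
  · rintro (rfl | ⟨w, ⟨k, hk, rfl⟩ | hw, rfl⟩)
    · exact Or.inl ⟨j + 1, le_rfl, by simp⟩
    · exact Or.inl ⟨k, hk.trans j.le_succ, by rw [sum_Ico_succ_top hk, add_comm]⟩
    · exact Or.inr (by omega)

theorem add_mem_truncArfSet (hf : ∀ i < j, f i ∈ truncArfSet f i) {a b : ℕ}
    (ha : a ∈ truncArfSet f j) (hb : b ∈ truncArfSet f j) : a + b ∈ truncArfSet f j := by
  induction j generalizing a b with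
  | zero => exact Or.inr (by simp)
  | succ j ih =>
    replace ih := @ih fun i hi => hf i (hi.trans j.lt_succ_self)
    rcases mem_truncArfSet_succ.1 ha with rfl | ⟨a', ha', rfl⟩
    · simpa using hb
    rcases mem_truncArfSet_succ.1 hb with rfl | ⟨b', hb', rfl⟩
    · simpa using ha
    exact mem_truncArfSet_succ.2 <| Or.inr
      ⟨a' + (f j + b'), ih ha' (ih (hf j j.lt_succ_self) hb'), by ring⟩

theorem sum_range_sub_one_notMem_truncArfSet (hj : 0 < j) (hf : 2 ≤ f 0) :
    ∑ i ∈ range j, f i - 1 ∉ truncArfSet f j := by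
  have hsplit : ∑ i ∈ range j, f i = f 0 + ∑ i ∈ Ico 1 j, f i := by
    rw [range_eq_Ico, sum_eq_sum_Ico_succ_bot hj]
  rintro (⟨k, hk, hz⟩ | hz)
  · rcases Nat.eq_zero_or_pos k with rfl | hk0
    · rw [← range_eq_Ico] at hz
      omega
    · have : ∑ i ∈ Ico k j, f i ≤ ∑ i ∈ Ico 1 j, f i :=
        sum_le_sum_of_subset (Ico_subset_Ico_left hk0)
      omega
  · omega

theorem sum_Ico_lt_sum_Ico (hf : ∀ i < j, 0 < f i) {k l : ℕ} (hkl : k < l) (hlj : l ≤ j) :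
    ∑ i ∈ Ico l j, f i < ∑ i ∈ Ico k j, f i := by
  rw [← sum_Ico_consecutive f hkl.le hlj, sum_eq_sum_Ico_succ_bot hkl]
  have := hf k (by omega)
  omega

theorem compl_truncArfSet :
    (truncArfSet f j)ᶜ =
      ↑(range (∑ i ∈ range j, f i) \ (Icc 1 j).image fun k => ∑ i ∈ Ico k j, f i) := by
  ext z
  simp only [truncArfSet, Set.mem_compl_iff, Set.mem_ofPred_eq, coe_sdiff, coe_range, coe_image,
    coe_Icc, Set.mem_sdiff, Set.mem_Iio, Set.mem_image, Set.mem_Icc, not_or, not_exists, not_and,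
    not_le]
  constructor
  · rintro ⟨hne, hz⟩
    exact ⟨hz, fun k ⟨_, hk⟩ hkz => hne k hk hkz.symm⟩
  · rintro ⟨hz, hne⟩
    refine ⟨fun k hk hkz => ?_, hz⟩
    rcases Nat.eq_zero_or_pos k with rfl | hk0
    · rw [← range_eq_Ico] at hkz
      omega
    · exact hne k ⟨hk0, hk⟩ hkz.symm

theorem ncard_compl_truncArfSet (hf : ∀ i < j, 0 < f i) :
    (truncArfSet f j)ᶜ.ncard = ∑ i ∈ range j, f i - j := by
  have hinj : Set.InjOn (fun k => ∑ i ∈ Ico k j, f i) (Icc 1 j : Finset ℕ) :=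
    StrictAntiOn.injOn fun k _ l hl hkl => sum_Ico_lt_sum_Ico hf hkl (mem_Icc.1 hl).2
  have hsub :
      (Icc 1 j).image (fun k => ∑ i ∈ Ico k j, f i) ⊆ range (∑ i ∈ range j, f i) := by
    intro z hz
    obtain ⟨k, hk, rfl⟩ := mem_image.1 hz
    rw [mem_range, range_eq_Ico]
    exact sum_Ico_lt_sum_Ico hf (mem_Icc.1 hk).1 (mem_Icc.1 hk).2
  rw [compl_truncArfSet, Set.ncard_coe_finset, card_sdiff_of_subset hsub, card_range,
    card_image_of_injOn hinj, Nat.card_Icc, Nat.add_sub_cancel]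

end truncArfSet

section

variable {n : ℕ} {x : Fin n → ℕ}

theorem sum_map_valEmbedding_extend (s : Finset (Fin n)) :
    ∑ i ∈ s.map Fin.valEmbedding, Function.extend Fin.val x 0 i = ∑ k ∈ s, x k := by
  rw [sum_map]
  exact sum_congr rfl fun k _ => Fin.val_injective.extend_apply x 0 k

theorem sum_univ_eq_sum_range_extend :
    ∑ i, x i = ∑ i ∈ range n, Function.extend Fin.val x 0 i := by
  rw [← sum_map_valEmbedding_extend, Fin.map_valEmbedding_univ, Nat.Iio_eq_range]

theorem sum_Ici_eq_sum_Ico_extend (k : Fin n) :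
    ∑ i ∈ Ici k, x i = ∑ i ∈ Ico k.1 n, Function.extend Fin.val x 0 i := by
  rw [← sum_map_valEmbedding_extend, Fin.map_valEmbedding_Ici]

theorem arfSet_eq_truncArfSet : arfSet n x = truncArfSet (Function.extend Fin.val x 0) n := by
  ext z
  simp only [arfSet, truncArfSet, Set.mem_ofPred_eq, sum_Ici_eq_sum_Ico_extend,
    ← sum_univ_eq_sum_range_extend]
  constructor
  · rintro (rfl | ⟨k, rfl⟩ | hz)
    · exact Or.inl ⟨n, le_rfl, by simp⟩
    · exact Or.inl ⟨k, k.isLt.le, rfl⟩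
    · exact Or.inr hz
  · rintro (⟨k, hk, rfl⟩ | hz)
    · rcases hk.lt_or_eq with hk | rfl
      · exact Or.inr (Or.inl ⟨⟨k, hk⟩, rfl⟩)
      · simp
    · exact Or.inr (Or.inr hz)

theorem ArfSeq.two_le_extend (hx : ArfSeq n x) {i : ℕ} (hi : i < n) :
    2 ≤ Function.extend Fin.val x 0 i :=
  (Fin.val_injective.extend_apply x 0 ⟨i, hi⟩).symm ▸ hx.2.2.1 _

theorem ArfSeq.extend_mem_truncArfSet (hx : ArfSeq n x) {i : ℕ} (hi : i < n) :
    Function.extend Fin.val x 0 i ∈ truncArfSet (Function.extend Fin.val x 0) i := by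
  obtain _ | i := i
  · exact Or.inr (by simp)
  rw [show Function.extend Fin.val x 0 (i + 1) = x ⟨i + 1, hi⟩ from
    Fin.val_injective.extend_apply x 0 ⟨i + 1, hi⟩]
  rcases hx.2.2.2 ⟨i, by omega⟩ hi with ⟨k, hk, hsum⟩ | hge
  · refine Or.inl ⟨k, by simp only [Fin.le_def] at hk; omega, ?_⟩
    rw [hsum, ← sum_map_valEmbedding_extend, Fin.map_valEmbedding_Icc,
      ← Ico_add_one_right_eq_Icc]
  · refine Or.inr ?_
    rwa [← sum_map_valEmbedding_extend, Fin.map_valEmbedding_Iic,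
      ← Nat.range_succ_eq_Iic] at hge

end

theorem arfSet_isNumericalSemigroup_frobenius_genus
    (n : ℕ) (x : Fin n → ℕ) (hx : ArfSeq n x) :
    IsNumericalSemigroup (arfSet n x) ∧
    frobeniusOf (arfSet n x) = (∑ i, x i) - 1 ∧
    conductorOf (arfSet n x) = ∑ i, x i ∧
    genusOf (arfSet n x) = (∑ i, x i) - n := by
  have hS := arfSet_eq_truncArfSet (x := x)
  have hT := sum_univ_eq_sum_range_extend (x := x)
  have hIci : Set.Ici (∑ i, x i) ⊆ arfSet n x := fun _ hz => Or.inr (Or.inr hz)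
  have hgap : (∑ i, x i) - 1 ∉ arfSet n x := by
    rw [hS, hT]
    exact sum_range_sub_one_notMem_truncArfSet hx.1 (hx.two_le_extend hx.1)
  refine ⟨⟨Or.inl rfl, ?_, ?_⟩, frobeniusOf_eq_of_Ici_subset hIci hgap,
    conductorOf_eq_of_Ici_subset hIci hgap, ?_⟩
  · rw [hS]
    exact fun a ha b hb => add_mem_truncArfSet (fun i hi => hx.extend_mem_truncArfSet hi) ha hb
  · exact (Set.finite_Iio _).subset fun z hz => not_le.1 fun h => hz (hIci h)
  · rw [genusOf, hS, hT]
    exact ncard_compl_truncArfSet fun i hi => zero_lt_two.trans_le (hx.two_le_extend hi)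
end

section
/- Let k be a positive integer. (i) If (x_1, …, x_{k+1}) is an Arf sequence, then (x_1, …, x_k) is an Arf sequence. (ii) If (x_1, …, x_k) is an Arf sequence and x_{k+1} is any positive element of the set S(x_1, …, x_k), then (x_1, …, x_k, x_{k+1}) is an Arf sequence. -/
/-- The condition `ArfSeq` imposes on the entry `v` following `x i`. -/
def ArfStep {n : ℕ} (x : Fin n → ℕ) (i : Fin n) (v : ℕ) : Prop :=
  (∃ j : Fin n, j ≤ i ∧ v = ∑ k ∈ Finset.Icc j i, x k) ∨
    (∑ k ∈ Finset.Iic i, x k) ≤ v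

namespace ArfStep

theorem le {n : ℕ} {x : Fin n → ℕ} {i : Fin n} {v : ℕ} (h : ArfStep x i v) : x i ≤ v := by
  rcases h with ⟨j, hj, rfl⟩ | h
  · exact Finset.single_le_sum (fun _ _ => Nat.zero_le _) (Finset.mem_Icc.2 ⟨hj, le_rfl⟩)
  · exact (Finset.single_le_sum (fun _ _ => Nat.zero_le _) (Finset.mem_Iic.2 le_rfl)).trans h

theorem castSucc_iff {n : ℕ} (x : Fin (n + 1) → ℕ) (i : Fin n) (v : ℕ) :
    ArfStep x i.castSucc v ↔ ArfStep (Fin.init x) i v := by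
  simp only [ArfStep, Fin.exists_fin_succ', Fin.castSucc_le_castSucc_iff, Fin.sum_Icc_castSucc,
    Fin.sum_Iic_castSucc, Fin.init, not_le.2 (Fin.castSucc_lt_last i), false_and, or_false]

end ArfStep

theorem arfSeq_succ_iff {m : ℕ} (x : Fin (m + 1) → ℕ) :
    ArfSeq (m + 1) x ↔
      Monotone x ∧ (∀ i, 2 ≤ x i) ∧ ∀ i : Fin m, ArfStep x i.castSucc (x i.succ) := by
  have hsteps : (∀ i : Fin (m + 1), ∀ h : i.1 + 1 < m + 1, ArfStep x i (x ⟨i.1 + 1, h⟩)) ↔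
      ∀ i : Fin m, ArfStep x i.castSucc (x i.succ) := by
    simp only [Fin.forall_fin_succ', Fin.val_castSucc, Order.add_one_le_iff, Order.lt_add_one_iff,
      Fin.is_lt, forall_true_left, Fin.val_last, lt_self_iff_false, IsEmpty.forall_iff, and_true]
    rfl
  exact (and_iff_right (Nat.le_add_left 1 m)).trans (and_congr_right' (and_congr_right' hsteps))

theorem arfSeq_succ_succ_iff {m : ℕ} (x : Fin (m + 2) → ℕ) :
    ArfSeq (m + 2) x ↔
      ArfSeq (m + 1) (Fin.init x) ∧ x (Fin.last m).castSucc ≤ x (Fin.last (m + 1)) ∧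
      ArfStep (Fin.init x) (Fin.last m) (x (Fin.last (m + 1))) := by
  have hmono : Monotone x ↔
      Monotone (Fin.init x) ∧ x (Fin.last m).castSucc ≤ x (Fin.last (m + 1)) := by
    simp only [Fin.monotone_iff_le_succ, Fin.forall_fin_succ' (n := m), Fin.init,
      Fin.succ_castSucc, Fin.succ_last]
  have hsteps : (∀ i : Fin (m + 1), ArfStep x i.castSucc (x i.succ)) ↔
      (∀ i : Fin m, ArfStep (Fin.init x) i.castSucc (Fin.init x i.succ)) ∧
        ArfStep (Fin.init x) (Fin.last m) (x (Fin.last (m + 1))) := by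
    simp only [Fin.forall_fin_succ', ArfStep.castSucc_iff, Fin.init, Fin.succ_castSucc,
      Fin.succ_last]
  rw [arfSeq_succ_iff, arfSeq_succ_iff, hmono, hsteps,
    Fin.forall_fin_succ' (P := fun i => 2 ≤ x i)]
  constructor
  · rintro ⟨⟨hinit, hle⟩, ⟨htwo, -⟩, hprefix, hstep⟩
    exact ⟨⟨hinit, htwo, hprefix⟩, hle, hstep⟩
  · rintro ⟨⟨hinit, htwo, hprefix⟩, hle, hstep⟩
    exact ⟨⟨hinit, hle⟩, ⟨htwo, (htwo (Fin.last m)).trans hle⟩, hprefix, hstep⟩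

theorem arfStep_last_of_mem_arfSet {m : ℕ} {x : Fin (m + 1) → ℕ} {y : ℕ}
    (hy : y ∈ arfSet (m + 1) x) (hy0 : 0 < y) : ArfStep x (Fin.last m) y := by
  rcases hy with rfl | ⟨j, rfl⟩ | hy
  · exact absurd hy0 (lt_irrefl 0)
  · exact Or.inl ⟨j, Fin.le_last j, rfl⟩
  · exact Or.inr (by rwa [← Fin.top_eq_last, Finset.Iic_top])

theorem arfSeq_restrict_and_extend (k : ℕ) (hk : 0 < k) :
    (∀ x : Fin (k + 1) → ℕ, ArfSeq (k + 1) x → ArfSeq k (x ∘ Fin.castSucc)) ∧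
    (∀ x : Fin k → ℕ, ∀ y : ℕ, ArfSeq k x → y ∈ arfSet k x → 0 < y →
      ArfSeq (k + 1) (Fin.snoc x y)) := by
  obtain ⟨m, rfl⟩ := Nat.exists_eq_add_one_of_ne_zero hk.ne'
  refine ⟨fun x hx => ((arfSeq_succ_succ_iff x).1 hx).1, fun x y hx hy hy0 => ?_⟩
  have hstep := arfStep_last_of_mem_arfSet hy hy0
  rw [arfSeq_succ_succ_iff]
  simpa only [Fin.init_snoc, Fin.snoc_last, Fin.snoc_castSucc] using ⟨hx, hstep.le, hstep⟩
end

section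
/- Let (x_1, …, x_n) be an Arf sequence and let S = S(x_1, …, x_n). Then n = c(S) − g(S), where c(S) is the conductor and g(S) is the genus of S. -/
/-! The integers `≥ N = x₁ + ⋯ + xₙ` all lie in `S`, while `N - 1` does not because `x₁ ≥ 2`;
hence `c(S) = N`. Up to `N`, the elements of `S` are `0` and the `n` suffix sums
`xₙ + ⋯ + x_k`, which are pairwise distinct since every `x_i` is positive. So `S` has `n + 1`
elements in `[0, N]`, whence `g(S) = (N + 1) - (n + 1)` and `c(S) - g(S) = n`. -/

section ConductorGenus

variable {S : Set ℕ} {c : ℕ}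

theorem conductorOf_eq_of_forall_le_mem (hS : ∀ z, c ≤ z → z ∈ S) (hc : c - 1 ∉ S) :
    conductorOf S = c := by
  refine le_antisymm (Nat.sInf_le hS) (not_lt.1 fun hlt => hc ?_)
  exact Nat.sInf_mem (s := {c | ∀ z, c ≤ z → z ∈ S}) ⟨c, hS⟩ (c - 1)
    (by unfold conductorOf at hlt; omega)

theorem genusOf_add_ncard_inter_Iio (hS : ∀ z, c ≤ z → z ∈ S) :
    genusOf S + (S ∩ Set.Iio c).ncard = c := by
  have hgaps : Sᶜ ⊆ Set.Iio c := fun z hz => not_le.1 fun h => hz (hS z h)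
  have hsplit : Sᶜ ∪ S ∩ Set.Iio c = Set.Iio c := by
    rw [Set.union_inter_distrib_left, Set.compl_union_self, Set.univ_inter,
      Set.union_eq_right.2 hgaps]
  rw [genusOf, ← Set.ncard_union_eq (disjoint_compl_left.mono_right Set.inter_subset_left)
    ((Set.finite_Iio c).subset hgaps), hsplit, Set.ncard_Iio_nat]

end ConductorGenus

section SuffixSum

variable {n : ℕ} (x : Fin n → ℕ)

def suffixSum (k : Fin n) : ℕ := ∑ i ∈ Finset.Ici k, x i

theorem suffixSum_le_sum (k : Fin n) : suffixSum x k ≤ ∑ i, x i :=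
  Finset.sum_le_sum_of_subset (Finset.subset_univ _)

theorem le_suffixSum (k : Fin n) : x k ≤ suffixSum x k :=
  Finset.single_le_sum (fun _ _ => Nat.zero_le _) (Finset.mem_Ici.2 le_rfl)

theorem suffixSum_strictAnti {x : Fin n → ℕ} (hx : ∀ i, 0 < x i) : StrictAnti (suffixSum x) :=
  fun k l hkl => Finset.sum_lt_sum_of_subset (Finset.Ici_subset_Ici.2 hkl.le)
    (Finset.mem_Ici.2 le_rfl) (by simpa using hkl) (hx k) (fun _ _ _ => Nat.zero_le _)

theorem suffixSum_zero (x : Fin (n + 1) → ℕ) : suffixSum x 0 = ∑ i, x i := by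
  rw [suffixSum, ← Finset.Ici_bot]
  rfl

theorem add_suffixSum_le_sum (x : Fin (n + 1) → ℕ) {k : Fin (n + 1)} (hk : k ≠ 0) :
    x 0 + suffixSum x k ≤ ∑ i, x i := by
  rw [suffixSum, ← Finset.sum_insert (by simpa [Finset.mem_Ici] using hk)]
  exact Finset.sum_le_sum_of_subset (Finset.subset_univ _)

end SuffixSum

section ArfSet

variable {m : ℕ} {x : Fin (m + 1) → ℕ}

theorem mem_arfSet_of_sum_le {z : ℕ} (hz : ∑ i, x i ≤ z) : z ∈ arfSet (m + 1) x :=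
  Or.inr (Or.inr hz)

theorem mem_arfSet_iff_of_le_sum {z : ℕ} (hz : z ≤ ∑ i, x i) :
    z ∈ arfSet (m + 1) x ↔ z = 0 ∨ z ∈ Set.range (suffixSum x) := by
  refine or_congr Iff.rfl ⟨?_, ?_⟩
  · rintro (⟨k, rfl⟩ | hle)
    · exact ⟨k, rfl⟩
    · exact ⟨0, by rw [suffixSum_zero]; omega⟩
  · rintro ⟨k, rfl⟩
    exact Or.inl ⟨k, rfl⟩

theorem sum_sub_one_notMem_arfSet (hx : 2 ≤ x 0) : ∑ i, x i - 1 ∉ arfSet (m + 1) x := by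
  have hx0 : x 0 ≤ ∑ i, x i := Finset.single_le_sum (fun _ _ => Nat.zero_le _) (Finset.mem_univ _)
  rw [mem_arfSet_iff_of_le_sum (Nat.sub_le _ _)]
  rintro (h | ⟨k, hk⟩)
  · omega
  · rcases eq_or_ne k 0 with rfl | hk0
    · rw [suffixSum_zero] at hk
      omega
    · have := add_suffixSum_le_sum x hk0
      omega

theorem arfSet_inter_Iio_eq :
    arfSet (m + 1) x ∩ Set.Iio (∑ i, x i + 1) = insert 0 (Set.range (suffixSum x)) := by
  ext z
  rw [Set.mem_inter_iff, Set.mem_Iio, Set.mem_insert_iff]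
  refine ⟨fun ⟨hz, hlt⟩ => (mem_arfSet_iff_of_le_sum (by omega)).1 hz, fun hz => ?_⟩
  have hle : z ≤ ∑ i, x i := by
    rcases hz with rfl | ⟨k, rfl⟩
    · exact Nat.zero_le _
    · exact suffixSum_le_sum x k
  exact ⟨(mem_arfSet_iff_of_le_sum hle).2 hz, by omega⟩

theorem ncard_arfSet_inter_Iio (hx : ∀ i, 0 < x i) :
    (arfSet (m + 1) x ∩ Set.Iio (∑ i, x i + 1)).ncard = m + 2 := by
  have h0 : 0 ∉ Set.range (suffixSum x) := by
    rintro ⟨k, hk⟩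
    have := le_suffixSum x k
    have := hx k
    omega
  rw [arfSet_inter_Iio_eq, Set.ncard_insert_of_notMem h0,
    Set.ncard_range_of_injective (suffixSum_strictAnti hx).injective, Nat.card_eq_fintype_card,
    Fintype.card_fin]

end ArfSet

theorem arfSeq_length_eq_conductor_sub_genus (n : ℕ) (x : Fin n → ℕ) (hx : ArfSeq n x) :
    n = conductorOf (arfSet n x) - genusOf (arfSet n x) := by
  obtain ⟨hn, -, hx2, -⟩ := hx
  obtain ⟨m, rfl⟩ := Nat.exists_eq_add_of_le' hn
  have hcond : conductorOf (arfSet (m + 1) x) = ∑ i, x i :=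
    conductorOf_eq_of_forall_le_mem (fun _ => mem_arfSet_of_sum_le)
      (sum_sub_one_notMem_arfSet (hx2 0))
  have hgenus := genusOf_add_ncard_inter_Iio (S := arfSet (m + 1) x) (c := ∑ i, x i + 1)
    fun _ hz => mem_arfSet_of_sum_le (by omega)
  rw [ncard_arfSet_inter_Iio fun i => two_pos.trans_le (hx2 i)] at hgenus
  omega
end

section
/- Let S be a numerical semigroup with multiplicity m. Then S has the Arf property if and only if for every i, j ∈ {0, …, m−1} the following holds: (i) if ⌈(w(i) − w(j))/m⌉ ≥ 0, then h(j, j) − h((2j − i) mod m, i) + 2⌈(w(i) − w(j))/m⌉ ≥ 0; (ii) if ⌈(w(i) − w(j))/m⌉ < 0, then h(j, j) − h((2j − i) mod m, i) + ⌈(w(i) − w(j))/m⌉ ≥ 0. Here ⌈·⌉ denotes the ceiling of a rational number. -/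
/-!
The Arf property already follows from its case `x = y`: `2x - y ∈ S` whenever `y ≤ x` lie in `S`.
Write `x = w(j) + a m` and `y = w(i) + b m` with `a, b ≥ 0`. Then `y ≤ x` means `a - b ≥ t`,
where `t = ⌈(w(i) - w(j))/m⌉`, and `2x - y`, which lies in the class `k ≡ 2j - i`, belongs to `S`
iff `w(k) + w(i) ≤ 2 w(j) + (2a - b) m`. Under these constraints the least value of `2a - b` is
`2t` for `t ≥ 0` (at `a = t, b = 0`) and `t` for `t < 0` (at `a = 0, b = -t`). Since `k + i ≡ 2j`,
the inequality `w(k) + w(i) ≤ 2 w(j) + c m` is `h(j, j) - h(k, i) + c ≥ 0`.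
-/

theorem add_sub_mem_of_forall_add_sub_mem {S : Set ℕ}
    (hS : ∀ x ∈ S, ∀ y ∈ S, y ≤ x → x + x - y ∈ S) {x y z : ℕ} (hx : x ∈ S) (hy : y ∈ S)
    (hz : z ∈ S) (hzy : z ≤ y) (hyx : y ≤ x) : x + y - z ∈ S := by
  rcases hzy.eq_or_lt with rfl | hzy
  · rwa [Nat.add_sub_cancel]
  have hu : y + y - z ∈ S := hS y hy z hz hzy.le
  -- `x + y - z = u + x - y` for `u = y + y - z`, and `u + x - 2y < x + y - 2z`
  rcases le_total x (y + y - z) with h | h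
  · have := add_sub_mem_of_forall_add_sub_mem hS hu hx hy hyx h
    rwa [show y + y - z + x - y = x + y - z by omega] at this
  · have := add_sub_mem_of_forall_add_sub_mem hS hx hu hy (by omega) h
    rwa [show x + (y + y - z) - y = x + y - z by omega] at this
termination_by x + y - 2 * z

theorem hasArfProperty_iff {S : Set ℕ} :
    HasArfProperty S ↔ ∀ x ∈ S, ∀ y ∈ S, y ≤ x → x + x - y ∈ S :=
  ⟨fun h x hx y hy hyx => h x hx x hx y hy hyx le_rfl,
    fun h _ hx _ hy _ hz hzy hyx => add_sub_mem_of_forall_add_sub_mem h hx hy hz hzy hyx⟩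

theorem add_sub_mod_eq_toNat {x y : ℕ} (m : ℕ) (h : y ≤ x + x) :
    (x + x - y) % m = ((2 * ((x % m : ℕ) : ℤ) - ((y % m : ℕ) : ℤ)) % (m : ℤ)).toNat := by
  have hmod : (2 * ((x % m : ℕ) : ℤ) - ((y % m : ℕ) : ℤ)) % (m : ℤ) = ((x + x - y : ℕ) : ℤ) % m := by
    push_cast [Nat.cast_sub h]
    exact ((Int.mod_modEq x m).mul_left 2).sub (Int.mod_modEq y m) |>.trans (by ring_nf; rfl)
  rw [hmod, ← Int.natCast_mod, Int.toNat_natCast]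

theorem toNat_emod_add_mod {m : ℕ} (hm : 0 < m) (i j : ℕ) :
    (((2 * (j : ℤ) - i) % m).toNat + i) % m = (j + j) % m := by
  have hnonneg : 0 ≤ (2 * (j : ℤ) - i) % m := Int.emod_nonneg _ (by omega)
  zify
  rw [Int.toNat_of_nonneg hnonneg, Int.emod_add_emod]
  ring_nf

theorem aperyW_le {S : Set ℕ} {m s : ℕ} (hs : s ∈ S) : aperyW S m (s % m) ≤ s :=
  Nat.sInf_le ⟨hs, rfl⟩

theorem aperyW_mem_and_mod {S : Set ℕ} {m i : ℕ} (h : ∃ s ∈ S, s % m = i) :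
    aperyW S m i ∈ S ∧ aperyW S m i % m = i :=
  Nat.sInf_mem h

theorem exists_eq_aperyW_add_mul {S : Set ℕ} {m s : ℕ} (hs : s ∈ S) :
    ∃ a, s = aperyW S m (s % m) + m * a := by
  have hle : aperyW S m (s % m) ≤ s := aperyW_le hs
  obtain ⟨a, ha⟩ := (Nat.modEq_iff_dvd' hle).mp (aperyW_mem_and_mod ⟨s, hs, rfl⟩).2
  exact ⟨a, by omega⟩

noncomputable def aperyCeil (S : Set ℕ) (m i j : ℕ) : ℤ :=
  ⌈((aperyW S m i : ℚ) - (aperyW S m j : ℚ)) / (m : ℚ)⌉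

theorem aperyCeil_le_iff {S : Set ℕ} {m i j : ℕ} (hm : 0 < m) {n : ℤ} :
    aperyCeil S m i j ≤ n ↔ (aperyW S m i : ℤ) ≤ aperyW S m j + n * m := by
  rw [aperyCeil, Int.ceil_le, div_le_iff₀ (by exact_mod_cast hm), sub_le_iff_le_add']
  exact_mod_cast Iff.rfl

theorem cocycle_sub_cocycle_add_nonneg_iff {S : Set ℕ} {m i j k : ℕ} (hm : 0 < m)
    (hk : (k + i) % m = (j + j) % m) (c : ℤ) :
    0 ≤ cocycle S m j j - cocycle S m k i + c ↔
      (aperyW S m k : ℤ) + aperyW S m i ≤ 2 * aperyW S m j + c * m := by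
  have hm' : (0 : ℚ) < m := by exact_mod_cast hm
  have hsum : cocycle S m j j - cocycle S m k i + c =
      ((2 * aperyW S m j + c * m - (aperyW S m k + aperyW S m i) : ℤ) : ℚ) / m := by
    rw [cocycle, cocycle, hk]
    field_simp
    push_cast
    ring
  rw [hsum, le_div_iff₀ hm', zero_mul, Int.cast_nonneg_iff, sub_nonneg]

namespace IsNumericalSemigroup

variable {S : Set ℕ} {m : ℕ}

theorem multiplicityOf_mem_and_pos (hS : IsNumericalSemigroup S) :
    multiplicityOf S ∈ S ∧ 0 < multiplicityOf S := by
  obtain ⟨B, hB⟩ := hS.2.2.bddAbove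
  have hB1 : B + 1 ∈ S := by_contra fun h => by have := hB h; omega
  exact Nat.sInf_mem (s := {n | n ∈ S ∧ 0 < n}) ⟨B + 1, hB1, B.succ_pos⟩

theorem exists_mem_mod_eq (hS : IsNumericalSemigroup S) (hm : 0 < m) {i : ℕ} (hi : i < m) :
    ∃ s ∈ S, s % m = i := by
  obtain ⟨B, hB⟩ := hS.2.2.bddAbove
  refine ⟨i + m * (B + 1), by_contra fun h => ?_, by simp [Nat.mod_eq_of_lt hi]⟩
  have := hB h
  nlinarith

theorem add_mul_mem (hS : IsNumericalSemigroup S) (hmS : m ∈ S) {s : ℕ} (hs : s ∈ S) (a : ℕ) :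
    s + m * a ∈ S := by
  induction a with
  | zero => simpa using hs
  | succ a ih => simpa [mul_add, ← add_assoc] using hS.2.1 _ ih m hmS

theorem mem_iff_aperyW_le (hS : IsNumericalSemigroup S) (hmS : m ∈ S) (hm : 0 < m) {s : ℕ} :
    s ∈ S ↔ aperyW S m (s % m) ≤ s := by
  refine ⟨aperyW_le, fun h => ?_⟩
  obtain ⟨hwS, hw⟩ := aperyW_mem_and_mod (hS.exists_mem_mod_eq hm (Nat.mod_lt s hm))
  obtain ⟨a, ha⟩ := (Nat.modEq_iff_dvd' h).mp hw
  rw [show s = aperyW S m (s % m) + m * a by omega]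
  exact hS.add_mul_mem hmS hwS a

theorem hasArfProperty_iff_aperyW (hS : IsNumericalSemigroup S) (hmS : m ∈ S) (hm : 0 < m) :
    HasArfProperty S ↔ ∀ i < m, ∀ j < m,
      (aperyW S m ((2 * (j : ℤ) - (i : ℤ)) % (m : ℤ)).toNat : ℤ) + aperyW S m i ≤
        2 * aperyW S m j + max (2 * aperyCeil S m i j) (aperyCeil S m i j) * m := by
  rw [hasArfProperty_iff]
  constructor
  · intro h i hi j hj
    obtain ⟨hwi, hwi_mod⟩ := aperyW_mem_and_mod (hS.exists_mem_mod_eq hm hi)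
    obtain ⟨hwj, hwj_mod⟩ := aperyW_mem_and_mod (hS.exists_mem_mod_eq hm hj)
    obtain ⟨a, b, hab, h2ab⟩ : ∃ a b : ℕ, (a : ℤ) - b = aperyCeil S m i j ∧
        2 * (a : ℤ) - b = max (2 * aperyCeil S m i j) (aperyCeil S m i j) :=
      ⟨(aperyCeil S m i j).toNat, (-aperyCeil S m i j).toNat, by omega, by omega⟩
    have hyx : aperyW S m i + m * b ≤ aperyW S m j + m * a := by
      have := (aperyCeil_le_iff (S := S) (i := i) (j := j) hm).mp le_rfl
      rw [← hab] at this
      zify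
      linarith
    have hmem := h _ (hS.add_mul_mem hmS hwj a) _ (hS.add_mul_mem hmS hwi b) hyx
    rw [hS.mem_iff_aperyW_le hmS hm, add_sub_mod_eq_toNat m (by omega)] at hmem
    simp only [Nat.add_mul_mod_self_left, hwi_mod, hwj_mod] at hmem
    zify [show aperyW S m i + m * b ≤ aperyW S m j + m * a + (aperyW S m j + m * a) by omega]
      at hmem
    rw [← h2ab]
    linarith
  · intro h x hx y hy hyx
    obtain ⟨a, ha⟩ := exists_eq_aperyW_add_mul (m := m) hx
    obtain ⟨b, hb⟩ := exists_eq_aperyW_add_mul (m := m) hy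
    have hk := h _ (Nat.mod_lt y hm) _ (Nat.mod_lt x hm)
    have hab : aperyCeil S m (y % m) (x % m) ≤ a - b := by
      rw [aperyCeil_le_iff hm]
      zify at ha hb hyx
      linarith
    have hc : max (2 * aperyCeil S m (y % m) (x % m)) (aperyCeil S m (y % m) (x % m)) * m ≤
        (2 * a - b) * m :=
      mul_le_mul_of_nonneg_right (by omega) (by positivity)
    rw [hS.mem_iff_aperyW_le hmS hm, add_sub_mod_eq_toNat m (by omega)]
    zify at ha hb
    have : (aperyW S m ((2 * ((x % m : ℕ) : ℤ) - ((y % m : ℕ) : ℤ)) % (m : ℤ)).toNat : ℤ) ≤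
        x + x - y := by linarith
    omega

end IsNumericalSemigroup

theorem arf_iff_cocycle_condition (S : Set ℕ) (hS : IsNumericalSemigroup S)
    (m : ℕ) (hm : m = multiplicityOf S) :
    HasArfProperty S ↔
      ∀ i < m, ∀ j < m,
        ((0:ℤ) ≤ ⌈((aperyW S m i : ℚ) - (aperyW S m j : ℚ)) / (m : ℚ)⌉ →
          0 ≤ cocycle S m j j
              - cocycle S m ((2 * (j : ℤ) - (i : ℤ)) % (m : ℤ)).toNat i
              + 2 * (⌈((aperyW S m i : ℚ) - (aperyW S m j : ℚ)) / (m : ℚ)⌉ : ℚ)) ∧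
        (⌈((aperyW S m i : ℚ) - (aperyW S m j : ℚ)) / (m : ℚ)⌉ < (0:ℤ) →
          0 ≤ cocycle S m j j
              - cocycle S m ((2 * (j : ℤ) - (i : ℤ)) % (m : ℤ)).toNat i
              + (⌈((aperyW S m i : ℚ) - (aperyW S m j : ℚ)) / (m : ℚ)⌉ : ℚ)) := by
  obtain ⟨hmS, hm0⟩ : m ∈ S ∧ 0 < m := hm ▸ hS.multiplicityOf_mem_and_pos
  rw [hS.hasArfProperty_iff_aperyW hmS hm0]
  refine forall₂_congr fun i _ => forall₂_congr fun j _ => ?_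
  have hcocycle := cocycle_sub_cocycle_add_nonneg_iff (S := S) hm0 (toNat_emod_add_mod hm0 i j)
  unfold aperyCeil
  generalize ⌈((aperyW S m i : ℚ) - (aperyW S m j : ℚ)) / (m : ℚ)⌉ = t
  rw [show (2 : ℚ) * t = ((2 * t : ℤ) : ℚ) by push_cast; rfl, hcocycle, hcocycle]
  rcases le_or_gt 0 t with ht | ht
  · simp [ht, max_eq_left (show t ≤ 2 * t by omega)]
  · simp [ht, max_eq_right (show 2 * t ≤ t by omega)]
end

section
/- Let S be a numerical semigroup with the Arf property, multiplicity m ≥ 2, conductor c and Kunz coordinates (x_1, …, x_{m−1}). Then x_1 = ⌈c/m⌉ and x_{m−1} = ⌊c/m⌋. -/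
/-!
In an Arf semigroup two consecutive elements `a, a + 1` force every integer `≥ a` into `S`
(from `a + k, a + k + 1 ∈ S` the Arf property gives `2(a + k + 1) - (a + k) = a + k + 2`),
so `a ≥ c`. Now `w(1) - 1 = x₁ m` and `w(m - 1) + 1 = (x_{m-1} + 1) m` are multiples of `m`,
hence in `S`; this gives `c ≤ x₁ m` and `c < (x_{m-1} + 1) m`. Conversely every Apéry element
satisfies `w(i) < c + m`, since otherwise `w(i) - m ≥ c` would be a smaller element of `S`
in the same residue class. These inequalities pin `x₁` and `x_{m-1}` to `⌈c/m⌉` and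
`⌊c/m⌋`.
-/

namespace IsNumericalSemigroup

variable {S : Set ℕ}

theorem mem_of_conductorOf_le (hS : IsNumericalSemigroup S) {n : ℕ} (hn : conductorOf S ≤ n) :
    n ∈ S := by
  obtain ⟨N, hN⟩ := hS.2.2.bddAbove
  have hne : {c | ∀ n, c ≤ n → n ∈ S}.Nonempty :=
    ⟨N + 1, fun n hn => by_contra fun hnS => by have := hN hnS; omega⟩
  exact Nat.sInf_mem hne n hn

theorem multiplicityOf_mem (hS : IsNumericalSemigroup S) : multiplicityOf S ∈ S :=
  (Nat.sInf_mem (s := {n | n ∈ S ∧ 0 < n})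
    ⟨conductorOf S + 1, hS.mem_of_conductorOf_le (Nat.le_succ _), Nat.succ_pos _⟩).1

theorem mul_mem (hS : IsNumericalSemigroup S) {m : ℕ} (hm : m ∈ S) (k : ℕ) : k * m ∈ S := by
  induction k with
  | zero => simpa using hS.1
  | succ k ih => simpa [Nat.succ_mul] using hS.2.1 _ ih _ hm

end IsNumericalSemigroup

namespace HasArfProperty

variable {S : Set ℕ}

theorem mem_of_le_of_mem_of_succ_mem (hA : HasArfProperty S) {a : ℕ} (ha : a ∈ S)
    (ha₁ : a + 1 ∈ S) {n : ℕ} (hn : a ≤ n) : n ∈ S := by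
  have hpair : ∀ k, a + k ∈ S ∧ a + k + 1 ∈ S := by
    intro k
    induction k with
    | zero => exact ⟨ha, ha₁⟩
    | succ k ih =>
      refine ⟨ih.2, ?_⟩
      have h := hA _ ih.2 _ ih.2 _ ih.1 (Nat.le_succ _) le_rfl
      rwa [show a + k + 1 + (a + k + 1) - (a + k) = a + (k + 1) + 1 by omega] at h
  simpa [Nat.add_sub_cancel' hn] using (hpair (n - a)).1

theorem conductorOf_le_of_mem_of_succ_mem (hA : HasArfProperty S) {a : ℕ} (ha : a ∈ S)
    (ha₁ : a + 1 ∈ S) : conductorOf S ≤ a :=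
  Nat.sInf_le fun _ => hA.mem_of_le_of_mem_of_succ_mem ha ha₁

end HasArfProperty

section Apery

variable {S : Set ℕ} {m c : ℕ}

theorem aperyW_mem (hc : ∀ n, c ≤ n → n ∈ S) {i : ℕ} (hi : i < m) :
    aperyW S m i ∈ S ∧ aperyW S m i % m = i := by
  refine Nat.sInf_mem (s := {s | s ∈ S ∧ s % m = i})
    ⟨c * m + i, hc _ ?_, by simp [Nat.mod_eq_of_lt hi]⟩
  exact le_add_right (Nat.le_mul_of_pos_right c (by omega))

theorem aperyW_lt_add (hc : ∀ n, c ≤ n → n ∈ S) {i : ℕ} (hi : i < m) :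
    aperyW S m i < c + m := by
  obtain ⟨hwS, hwi⟩ := aperyW_mem hc hi
  by_contra! hle
  have hsub : aperyW S m i - m ∈ {s | s ∈ S ∧ s % m = i} :=
    ⟨hc _ (by omega), Eq.trans ((Nat.sub_modulus_modEq_iff (by omega)).mpr rfl) hwi⟩
  have : aperyW S m i ≤ aperyW S m i - m := Nat.sInf_le hsub
  omega

end Apery

theorem natCast_eq_ceil_div {c m k : ℕ} (hm : 0 < m) (h₁ : c ≤ k * m) (h₂ : k * m < c + m) :
    (k : ℤ) = ⌈(c : ℚ) / m⌉ := by
  have hmQ : (0 : ℚ) < m := by exact_mod_cast hm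
  refine (Int.ceil_eq_iff.mpr ⟨?_, ?_⟩).symm
  · rw [lt_div_iff₀ hmQ]
    push_cast
    linarith [(by exact_mod_cast h₂ : (k : ℚ) * m < c + m)]
  · rw [div_le_iff₀ hmQ]
    exact_mod_cast h₁

theorem natCast_eq_floor_div {c m k : ℕ} (hm : 0 < m) (h₁ : k * m ≤ c)
    (h₂ : c < k * m + m) :
    (k : ℤ) = ⌊(c : ℚ) / m⌋ := by
  have hmQ : (0 : ℚ) < m := by exact_mod_cast hm
  refine (Int.floor_eq_iff.mpr ⟨?_, ?_⟩).symm
  · rw [le_div_iff₀ hmQ]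
    exact_mod_cast h₁
  · rw [div_lt_iff₀ hmQ, add_one_mul]
    exact_mod_cast h₂

theorem arf_kunz_first_last (S : Set ℕ) (hS : IsNumericalSemigroup S)
    (hA : HasArfProperty S) (m : ℕ) (hm : m = multiplicityOf S) (hm2 : 2 ≤ m)
    (c : ℕ) (hc : c = conductorOf S) (x : ℕ → ℕ)
    (hx : ∀ i < m, aperyW S m i = x i * m + i) :
    (x 1 : ℤ) = ⌈(c : ℚ) / (m : ℚ)⌉ ∧ (x (m - 1) : ℤ) = ⌊(c : ℚ) / (m : ℚ)⌋ := by
  have hcS : ∀ n, c ≤ n → n ∈ S := fun _ hn => hS.mem_of_conductorOf_le (hc ▸ hn)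
  have hmul : ∀ k, k * m ∈ S := hS.mul_mem (hm ▸ hS.multiplicityOf_mem)
  have hw₁ : x 1 * m + 1 ∈ S := hx 1 (by omega) ▸ (aperyW_mem hcS (by omega)).1
  have hw₁_lt : x 1 * m + 1 < c + m := hx 1 (by omega) ▸ aperyW_lt_add hcS (by omega)
  have hc₁ : c ≤ x 1 * m := hc ▸ hA.conductorOf_le_of_mem_of_succ_mem (hmul _) hw₁
  have hw : x (m - 1) * m + (m - 1) ∈ S :=
    hx (m - 1) (by omega) ▸ (aperyW_mem hcS (by omega)).1
  have hw_lt : x (m - 1) * m + (m - 1) < c + m :=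
    hx (m - 1) (by omega) ▸ aperyW_lt_add hcS (by omega)
  have hw_succ : x (m - 1) * m + (m - 1) + 1 ∈ S := by
    simpa [Nat.succ_mul, show m - 1 + 1 = m by omega, add_assoc] using hmul (x (m - 1) + 1)
  have hc_le : c ≤ x (m - 1) * m + (m - 1) :=
    hc ▸ hA.conductorOf_le_of_mem_of_succ_mem hw hw_succ
  exact ⟨natCast_eq_ceil_div (by omega) hc₁ (by omega),
    natCast_eq_floor_div (by omega) (by omega) (by omega)⟩
end

section
/- Let c be an integer with c ≥ 4 and c ≢ 1 (mod 4), and let S ⊆ ℕ. Then S is a numerical semigroup with the Arf property, multiplicity 4 and conductor c if and only if: (i) c ≡ 0 (mod 4) and S = ⟨4, 4t+2, c+1, c+3⟩ for some integer t with 1 ≤ t ≤ c/4; or (ii) c ≡ 2 (mod 4) and S = ⟨4, 4t+2, c+1, c+3⟩ for some integer t with 1 ≤ t ≤ (c−2)/4; or (iii) c ≡ 3 (mod 4) and S = ⟨4, c, c+2, c+3⟩. -/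
/-! An Arf semigroup `S` of multiplicity 4 contains, with an odd element `x`, everything above `x`
outside the residue class of `x + 2`: the Arf property for `x ≥ x ≥ x - x % 4` puts `x + x % 4`
into the class of `2`. A gap `g ≥ x` would have to lie in that missing class, and then
`(g - 1) + (g - 1) - (g - 2) = g` would be an element. So all odd elements exceed the Frobenius
number, and `S` is determined by its conductor `c` and its least element `b ≡ 2 (mod 4)`: it
consists of the multiples of 4, the even numbers from `b` on and everything from `c` on. The three
families of the statement are the ways of generating such a set. -/

theorem conductorOf_eq_iff {S : Set ℕ} {c : ℕ} (hc : 0 < c) :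
    conductorOf S = c ↔ (∀ n, c ≤ n → n ∈ S) ∧ c - 1 ∉ S := by
  obtain ⟨k, rfl⟩ : ∃ k, c = k + 1 := ⟨c - 1, by omega⟩
  rw [conductorOf, Nat.sInf_upward_closed_eq_succ_iff (s := {c | ∀ n, c ≤ n → n ∈ S})
    (fun k₁ _ hk (h : ∀ n, k₁ ≤ n → n ∈ S) n hn => h n (hk.trans hn)) k, Nat.add_sub_cancel]
  refine and_congr_right fun hsucc => ⟨fun h hk => h fun n hn => ?_, fun h hk => h (hk k le_rfl)⟩
  rcases hn.eq_or_lt with rfl | hlt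
  exacts [hk, hsucc n hlt]

theorem multiplicityOf_eq_iff {S : Set ℕ} {m : ℕ} (hm : 0 < m) :
    multiplicityOf S = m ↔ m ∈ S ∧ ∀ n, 0 < n → n < m → n ∉ S := by
  constructor
  · rintro rfl
    have hne : {n | n ∈ S ∧ 0 < n}.Nonempty :=
      Set.nonempty_iff_ne_empty.2 fun h => hm.ne' (by rw [multiplicityOf, h, Nat.sInf_empty])
    exact ⟨(Nat.sInf_mem hne).1, fun n hn hlt hnS => hlt.not_ge (Nat.sInf_le ⟨hnS, hn⟩)⟩
  · rintro ⟨hmS, hlt⟩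
    exact IsLeast.csInf_eq ⟨⟨hmS, hm⟩, fun n ⟨hnS, hn⟩ => not_lt.1 fun h => hlt n hn h hnS⟩

def IsNumericalSemigroup.toAddSubmonoid {S : Set ℕ} (hS : IsNumericalSemigroup S) :
    AddSubmonoid ℕ where
  carrier := S
  add_mem' {a b} ha hb := hS.2.1 a ha b hb
  zero_mem' := hS.1

theorem AddSubmonoid.mem_of_le_of_mod_eq {M : AddSubmonoid ℕ} {m a n : ℕ} (hm : m ∈ M)
    (ha : a ∈ M) (han : a ≤ n) (hmod : a % m = n % m) : n ∈ M := by
  obtain ⟨k, hk⟩ := (Nat.modEq_iff_dvd' han).1 hmod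
  rw [show n = a + k • m by rw [smul_eq_mul, mul_comm, ← hk]; omega]
  exact M.add_mem ha (M.nsmul_mem hm k)

theorem mem_genNS_of_le_of_mod_eq {A : Set ℕ} {m a n : ℕ} (hm : m ∈ A) (ha : a ∈ insert 0 A)
    (han : a ≤ n) (hmod : a % m = n % m) : n ∈ genNS A := by
  refine (AddSubmonoid.closure A).mem_of_le_of_mod_eq (AddSubmonoid.subset_closure hm) ?_ han hmod
  rcases ha with rfl | ha
  exacts [zero_mem _, AddSubmonoid.subset_closure ha]

section ArfMultiplicityFour

variable {M : AddSubmonoid ℕ}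

theorem mem_of_le_of_odd_mem (hArf : HasArfProperty M) (h4 : 4 ∈ M) {x n : ℕ} (hx : x ∈ M)
    (hodd : x % 2 = 1) (hxn : x ≤ n) (hn : n % 4 ≠ (x + 2) % 4) : n ∈ M := by
  have hfloor : x - x % 4 ∈ M := M.mem_of_le_of_mod_eq h4 M.zero_mem (Nat.zero_le _) (by omega)
  have hw : x + x % 4 ∈ M := by
    have := hArf x hx x hx _ hfloor (Nat.sub_le _ _) le_rfl
    rwa [show x + x - (x - x % 4) = x + x % 4 by omega] at this
  rcases (by omega : n % 4 = 0 ∨ n % 4 = x % 4 ∨ (n % 4 = (x + x % 4) % 4 ∧ x + x % 4 ≤ n))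
    with h | h | ⟨h, hle⟩
  · exact M.mem_of_le_of_mod_eq h4 M.zero_mem (Nat.zero_le n) (by omega)
  · exact M.mem_of_le_of_mod_eq h4 hx hxn h.symm
  · exact M.mem_of_le_of_mod_eq h4 hw hle h.symm

theorem lt_of_odd_mem_of_notMem (hArf : HasArfProperty M) (h4 : 4 ∈ M) {x g : ℕ} (hx : x ∈ M)
    (hodd : x % 2 = 1) (hg : g ∉ M) : g < x := by
  by_contra! hxg
  apply hg
  by_cases hclass : g % 4 = (x + 2) % 4
  · have hg1 : g - 1 ∈ M := mem_of_le_of_odd_mem hArf h4 hx hodd (by omega) (by omega)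
    have hg2 : g - 2 ∈ M := mem_of_le_of_odd_mem hArf h4 hx hodd (by omega) (by omega)
    have := hArf _ hg1 _ hg1 _ hg2 (by omega) le_rfl
    rwa [show g - 1 + (g - 1) - (g - 2) = g by omega] at this
  · exact mem_of_le_of_odd_mem hArf h4 hx hodd hxg hclass

end ArfMultiplicityFour

def arfMultFour (b c : ℕ) : AddSubmonoid ℕ where
  carrier := {n | n % 4 = 0 ∨ (n % 2 = 0 ∧ b ≤ n) ∨ c ≤ n}
  add_mem' {x y} hx hy := by simp only [Set.mem_ofPred_eq] at *; omega
  zero_mem' := Or.inl rfl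

section ArfMultFour

variable {b c n : ℕ}

theorem mem_arfMultFour : n ∈ arfMultFour b c ↔ n % 4 = 0 ∨ (n % 2 = 0 ∧ b ≤ n) ∨ c ≤ n :=
  Iff.rfl

theorem isNumericalSemigroup_arfMultFour : IsNumericalSemigroup (arfMultFour b c) :=
  ⟨zero_mem _, fun _ hx _ hy => add_mem hx hy,
    (Set.finite_Iio c).subset fun n hn => by
      rw [Set.mem_compl_iff, SetLike.mem_coe, mem_arfMultFour] at hn
      exact Set.mem_Iio.2 (by omega)⟩

theorem hasArfProperty_arfMultFour : HasArfProperty (arfMultFour b c) := by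
  intro x hx y hy z hz hzy hyx
  simp only [SetLike.mem_coe, mem_arfMultFour] at *
  omega

theorem multiplicityOf_arfMultFour (hb : 3 ≤ b) (hc : 4 ≤ c) :
    multiplicityOf (arfMultFour b c) = 4 :=
  (multiplicityOf_eq_iff (by norm_num)).2
    ⟨Or.inl rfl, fun n hn hn4 => by rw [SetLike.mem_coe, mem_arfMultFour]; omega⟩

theorem conductorOf_arfMultFour (hc : 0 < c) (hc1 : c % 4 ≠ 1) (hbc : c % 2 = 0 ∨ c ≤ b) :
    conductorOf (arfMultFour b c) = c :=
  (conductorOf_eq_iff hc).2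
    ⟨fun n hn => Or.inr (Or.inr hn), by rw [SetLike.mem_coe, mem_arfMultFour]; omega⟩

theorem genNS_eq_arfMultFour_of_even (hb : b % 4 = 2) (hbc : b ≤ c + 2) (hc : c % 2 = 0) :
    genNS {4, b, c + 1, c + 3} = arfMultFour b c := by
  refine congrArg SetLike.coe (AddSubmonoid.closure_eq_of_le ?_ fun n hn => ?_)
  · simp only [Set.insert_subset_iff, Set.singleton_subset_iff, SetLike.mem_coe]
    exact ⟨Or.inl rfl, Or.inr (Or.inl ⟨by omega, le_rfl⟩), Or.inr (Or.inr (by omega)),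
      Or.inr (Or.inr (by omega))⟩
  · rw [mem_arfMultFour] at hn
    rcases (by omega : n % 4 = 0 ∨ (b ≤ n ∧ n % 4 = 2) ∨ (c + 1 ≤ n ∧ n % 4 = (c + 1) % 4) ∨
        (c + 3 ≤ n ∧ n % 4 = (c + 3) % 4)) with h | ⟨hle, h⟩ | ⟨hle, h⟩ | ⟨hle, h⟩
    · exact mem_genNS_of_le_of_mod_eq (m := 4) (by simp) (by simp) (Nat.zero_le n) (by omega)
    · exact mem_genNS_of_le_of_mod_eq (m := 4) (by simp) (by simp) hle (by omega)
    · exact mem_genNS_of_le_of_mod_eq (m := 4) (by simp) (by simp) hle h.symm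
    · exact mem_genNS_of_le_of_mod_eq (m := 4) (by simp) (by simp) hle h.symm

theorem genNS_eq_arfMultFour_of_mod_four_eq_three (hc : c % 4 = 3) (hcb : c ≤ b) :
    genNS {4, c, c + 2, c + 3} = arfMultFour b c := by
  refine congrArg SetLike.coe (AddSubmonoid.closure_eq_of_le ?_ fun n hn => ?_)
  · simp only [Set.insert_subset_iff, Set.singleton_subset_iff, SetLike.mem_coe]
    exact ⟨Or.inl rfl, Or.inr (Or.inr le_rfl), Or.inr (Or.inr (by omega)),
      Or.inr (Or.inr (by omega))⟩
  · rw [mem_arfMultFour] at hn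
    rcases (by omega : n % 4 = 0 ∨ (c ≤ n ∧ n % 4 = c % 4) ∨
        (c + 2 ≤ n ∧ n % 4 = (c + 2) % 4) ∨ (c + 3 ≤ n ∧ n % 4 = (c + 3) % 4))
      with h | ⟨hle, h⟩ | ⟨hle, h⟩ | ⟨hle, h⟩
    · exact mem_genNS_of_le_of_mod_eq (m := 4) (by simp) (by simp) (Nat.zero_le n) (by omega)
    · exact mem_genNS_of_le_of_mod_eq (m := 4) (by simp) (by simp) hle h.symm
    · exact mem_genNS_of_le_of_mod_eq (m := 4) (by simp) (by simp) hle h.symm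
    · exact mem_genNS_of_le_of_mod_eq (m := 4) (by simp) (by simp) hle h.symm

end ArfMultFour

theorem exists_eq_arfMultFour {M : AddSubmonoid ℕ} (hArf : HasArfProperty M) (h4 : 4 ∈ M)
    {c : ℕ} (hc : ∀ n, c ≤ n → n ∈ M) (hc1 : c - 1 ∉ M) :
    ∃ t, 4 * t + 2 ≤ c + 3 ∧ M = arfMultFour (4 * t + 2) c := by
  classical
  have hex : ∃ t, 4 * t + 2 ∈ M := ⟨(c + 1) / 4, hc _ (by omega)⟩
  have hmin : ∀ n ∈ M, n % 4 = 2 → 4 * Nat.find hex + 2 ≤ n := fun n hn hn2 => by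
    have := Nat.find_min' hex (m := n / 4) (by rwa [show 4 * (n / 4) + 2 = n by omega])
    omega
  refine ⟨Nat.find hex, ?_, SetLike.ext fun n => ⟨fun hn => ?_, fun hn => ?_⟩⟩
  · exact (hmin _ (hc (4 * ((c + 1) / 4) + 2) (by omega)) (by omega)).trans (by omega)
  · rw [mem_arfMultFour]
    rcases (by omega : n % 4 = 0 ∨ n % 4 = 2 ∨ n % 2 = 1) with h | h | h
    · exact Or.inl h
    · exact Or.inr (Or.inl ⟨by omega, hmin n hn h⟩)
    · have := lt_of_odd_mem_of_notMem hArf h4 hn h hc1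
      exact Or.inr (Or.inr (by omega))
  · rcases mem_arfMultFour.1 hn with h | ⟨h, hle⟩ | h
    · exact M.mem_of_le_of_mod_eq h4 M.zero_mem (Nat.zero_le n) (by omega)
    · rcases (by omega : n % 4 = 0 ∨ n % 4 = 2) with h | h
      · exact M.mem_of_le_of_mod_eq h4 M.zero_mem (Nat.zero_le n) (by omega)
      · exact M.mem_of_le_of_mod_eq h4 (Nat.find_spec hex) hle (by omega)
    · exact hc n h

theorem arf_multiplicity_four_general (c : ℕ) (hc : 4 ≤ c) (S : Set ℕ) :
    (IsNumericalSemigroup S ∧ HasArfProperty S ∧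
      multiplicityOf S = 4 ∧ conductorOf S = c) ↔
    ((c % 4 = 0 ∧ ∃ t : ℕ, 1 ≤ t ∧ t ≤ c / 4 ∧
        S = genNS {4, 4 * t + 2, c + 1, c + 3}) ∨
     (c % 4 = 2 ∧ ∃ t : ℕ, 1 ≤ t ∧ t ≤ (c - 2) / 4 ∧
        S = genNS {4, 4 * t + 2, c + 1, c + 3}) ∨
     (c % 4 = 3 ∧ S = genNS {4, c, c + 2, c + 3})) := by
  constructor
  · rintro ⟨hS, hArf, hm, hcond⟩
    obtain ⟨h4, hsmall⟩ := (multiplicityOf_eq_iff (by norm_num)).1 hm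
    obtain ⟨hge, hc1⟩ := (conductorOf_eq_iff (by omega)).1 hcond
    obtain ⟨t, htc, hSt⟩ := exists_eq_arfMultFour (M := hS.toAddSubmonoid) hArf h4 hge hc1
    obtain rfl : S = arfMultFour (4 * t + 2) c := congrArg SetLike.coe hSt
    have h2 := hsmall 2 (by norm_num) (by norm_num)
    rw [SetLike.mem_coe, mem_arfMultFour] at h2 hc1
    rcases (by omega : c % 4 = 0 ∨ c % 4 = 2 ∨ c % 4 = 3) with hc0 | hc2 | hc3
    · exact Or.inl ⟨hc0, t, by omega, by omega,
        (genNS_eq_arfMultFour_of_even (by omega) (by omega) (by omega)).symm⟩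
    · exact Or.inr (Or.inl ⟨hc2, t, by omega, by omega,
        (genNS_eq_arfMultFour_of_even (by omega) (by omega) (by omega)).symm⟩)
    · exact Or.inr (Or.inr ⟨hc3, (genNS_eq_arfMultFour_of_mod_four_eq_three hc3 (by omega)).symm⟩)
  · intro h
    obtain ⟨b, hb, hc1, hbc, rfl⟩ : ∃ b, 3 ≤ b ∧ c % 4 ≠ 1 ∧ (c % 2 = 0 ∨ c ≤ b) ∧
        S = arfMultFour b c := by
      rcases h with ⟨hc0, t, ht, htc, rfl⟩ | ⟨hc2, t, ht, htc, rfl⟩ | ⟨hc3, rfl⟩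
      · exact ⟨4 * t + 2, by omega, by omega, by omega,
          genNS_eq_arfMultFour_of_even (by omega) (by omega) (by omega)⟩
      · exact ⟨4 * t + 2, by omega, by omega, by omega,
          genNS_eq_arfMultFour_of_even (by omega) (by omega) (by omega)⟩
      · exact ⟨c, by omega, by omega, Or.inr le_rfl,
          genNS_eq_arfMultFour_of_mod_four_eq_three hc3 le_rfl⟩
    exact ⟨isNumericalSemigroup_arfMultFour, hasArfProperty_arfMultFour,
      multiplicityOf_arfMultFour hb hc, conductorOf_arfMultFour (by omega) hc1 hbc⟩

theorem arf_multiplicity_four (c : ℕ) (hc : 4 ≤ c) (h1 : c % 4 ≠ 1) (S : Set ℕ) :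
    (IsNumericalSemigroup S ∧ HasArfProperty S ∧
      multiplicityOf S = 4 ∧ conductorOf S = c) ↔
    ((c % 4 = 0 ∧ ∃ t : ℕ, 1 ≤ t ∧ t ≤ c / 4 ∧
        S = genNS {4, 4 * t + 2, c + 1, c + 3}) ∨
     (c % 4 = 2 ∧ ∃ t : ℕ, 1 ≤ t ∧ t ≤ (c - 2) / 4 ∧
        S = genNS {4, 4 * t + 2, c + 1, c + 3}) ∨
     (c % 4 = 3 ∧ S = genNS {4, c, c + 2, c + 3})) :=
  arf_multiplicity_four_general c hc S
end
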